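/- For every i ≥ 1, the word T_{2i+1} equals the reversal of its own bitwise complement (i.e., reverse(T_{2i+1}) = complement(T_{2i+1})). -/
import Mathlib


def wcompl (w : List Bool) : List Bool := w.map (fun b => !b)

def T : ℕ → List Bool
  | 0 => [false]
  | i + 1 => T i ++ wcompl (T i)

lemma wcompl_append (a b : List Bool) : wcompl (a ++ b) = wcompl a ++ wcompl b := by
  simp [wcompl]

lemma wcompl_reverse (w : List Bool) : wcompl w.reverse = (wcompl w).reverse := by
  simp [wcompl]

lemma wcompl_wcompl (w : List Bool) : wcompl (wcompl w) = w := by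
  simp [wcompl, List.map_map, Function.comp_def]

lemma anti : ∀ n : ℕ, (T (2 * n + 1)).reverse = wcompl (T (2 * n + 1)) := by
  intro n
  induction n with
  | zero => decide
  | succ k ih =>
    have h2 : (T (2 * k + 2)).reverse = T (2 * k + 2) := by
      show (T (2 * k + 1) ++ wcompl (T (2 * k + 1))).reverse = _
      rw [List.reverse_append, ← wcompl_reverse, ih, wcompl_wcompl]
      rfl
    have : 2 * (k + 1) + 1 = (2 * k + 2) + 1 := by ring
    rw [this]
    show (T (2 * k + 2) ++ wcompl (T (2 * k + 2))).reverse = wcompl (T (2 * k + 2) ++ wcompl (T (2 * k + 2)))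
    rw [List.reverse_append, ← wcompl_reverse, h2, wcompl_append, wcompl_wcompl]

theorem thue_morse_odd_antipalindrome :
    ∀ i : ℕ, 1 ≤ i → (T (2 * i + 1)).reverse = wcompl (T (2 * i + 1)) := by
  intro i _
  exact anti i
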